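/- arXiv:math/0701480 — 2 statements merged into one kernel-verified Lean document; each statement's English description precedes it below -/
import Mathlib

section
/- Let $(\sigma_i)_{i\in\mathbb{N}}$ be a sequence of reals with $0 \le \sigma_i$ for all $i$ and $\sup_i \sigma_i < \infty$, let $r > 0$, and suppose $\sum_{i} \sigma_i^r = \infty$. Then for every $\beta_0 > 0$ there exists a sequence $(A_j)_{j\in\mathbb{N}}$ of pairwise disjoint finite subsets of $\mathbb{N}$ such that $\beta_0 \le (\sum_{i \in A_j} \sigma_i^r)^{1/r} \le (\beta_0^r + \sup_i \sigma_i^r)^{1/r}$ for every $j$. -/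
open scoped BigOperators

/-- Greedy block selection: from a nonnegative bounded sequence whose `r`-th powers
have divergent sum, one extracts pairwise disjoint finite blocks whose `ℓ_r` norms
are uniformly bounded below by `β₀` and above by `(β₀ ^ r + sup_i σ_i ^ r) ^ (1/r)`. -/
theorem blocks_of_divergent_sum (σ : ℕ → ℝ) (hσ : ∀ i, 0 ≤ σ i) (r : ℝ) (hr : 0 < r)
    (hdiv : ¬ Summable (fun i => σ i ^ r)) (hbdd : BddAbove (Set.range σ)) :
    ∀ β₀ : ℝ, 0 < β₀ → ∃ A : ℕ → Finset ℕ,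
      (Pairwise fun j k => Disjoint (A j) (A k)) ∧
      ∀ j : ℕ, β₀ ≤ (∑ i ∈ A j, σ i ^ r) ^ (1 / r) ∧
        (∑ i ∈ A j, σ i ^ r) ^ (1 / r) ≤ (β₀ ^ r + ⨆ i, σ i ^ r) ^ (1 / r) := by
  classical
  intro β₀ hβ₀
  have hf0 : ∀ i, 0 ≤ σ i ^ r := fun i => Real.rpow_nonneg (hσ i) r
  have hbdd' : BddAbove (Set.range fun i => σ i ^ r) := by
    obtain ⟨C, hC⟩ := hbdd
    exact ⟨C ^ r, by rintro x ⟨i, rfl⟩; exact Real.rpow_le_rpow (hσ i) (hC ⟨i, rfl⟩) hr.le⟩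
  set M := ⨆ i, σ i ^ r with hMdef
  have hM : ∀ i, σ i ^ r ≤ M := fun i => le_ciSup hbdd' i
  have hM0 : 0 ≤ M := le_trans (hf0 0) (hM 0)
  have hS : Filter.Tendsto (fun n => ∑ i ∈ Finset.range n, σ i ^ r) Filter.atTop Filter.atTop :=
    (not_summable_iff_tendsto_nat_atTop_of_nonneg hf0).1 hdiv
  have htail : ∀ n : ℕ, ∃ m, n < m ∧ β₀ ^ r ≤ ∑ i ∈ Finset.Ico n m, σ i ^ r := by
    intro n
    obtain ⟨m, hm⟩ := ((hS.eventually_ge_atTop (β₀ ^ r + ∑ i ∈ Finset.range n, σ i ^ r)).and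
        (Filter.eventually_ge_atTop (n + 1))).exists
    refine ⟨m, hm.2, ?_⟩
    have hnm : n ≤ m := le_trans (Nat.le_succ n) hm.2
    rw [Finset.sum_Ico_eq_sub _ hnm]
    linarith [hm.1]
  let T : ℕ → Set ℕ := fun n => {m | n < m ∧ β₀ ^ r ≤ ∑ i ∈ Finset.Ico n m, σ i ^ r}
  have hne : ∀ n, (T n).Nonempty := fun n => htail n
  let nf : ℕ → ℕ := fun j => Nat.rec 0 (fun _ n => sInf (T n)) j
  have hnf_succ : ∀ j, nf (j + 1) = sInf (T (nf j)) := fun j => rfl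
  have hspec' : ∀ j, nf (j + 1) ∈ T (nf j) := fun j => by
    rw [hnf_succ]; exact Nat.sInf_mem (hne (nf j))
  have hlt : ∀ j, nf j < nf (j + 1) := fun j => (hspec' j).1
  have hmono : StrictMono nf := strictMono_nat_of_lt_succ hlt
  refine ⟨fun j => Finset.Ico (nf j) (nf (j + 1)), ?_, ?_⟩
  · have key : ∀ j k, j < k →
        Disjoint (Finset.Ico (nf j) (nf (j + 1))) (Finset.Ico (nf k) (nf (k + 1))) := by
      intro j k h
      apply Finset.disjoint_left.2
      intro x hx hx'
      simp only [Finset.mem_Ico] at hx hx'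
      have h2 : nf (j + 1) ≤ nf k := hmono.monotone (show j + 1 ≤ k by omega)
      omega
    intro j k hjk
    rcases hjk.lt_or_gt with h | h
    · exact key j k h
    · exact (key k j h).symm
  · intro j
    have hspec := hspec' j
    constructor
    · calc β₀ = (β₀ ^ r) ^ (1 / r) := by
            rw [one_div, Real.rpow_rpow_inv hβ₀.le hr.ne']
        _ ≤ _ := Real.rpow_le_rpow (Real.rpow_nonneg hβ₀.le r) hspec.2 (by positivity)
    · apply Real.rpow_le_rpow (Finset.sum_nonneg fun i _ => hf0 i) ?_ (by positivity)
      set m := nf (j + 1) with hm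
      show ∑ i ∈ Finset.Ico (nf j) m, σ i ^ r ≤ β₀ ^ r + M
      have hm1 : nf j < m := hspec.1
      have hβr : (0 : ℝ) ≤ β₀ ^ r := Real.rpow_nonneg hβ₀.le r
      rcases Nat.lt_or_ge (nf j) (m - 1) with h1 | h1
      · have hmin : ¬ (m - 1 ∈ T (nf j)) :=
          Nat.notMem_of_lt_sInf (by rw [← hnf_succ, ← hm]; omega)
        simp only [T, Set.mem_setOf_eq, not_and, not_le] at hmin
        have hlt' : ∑ i ∈ Finset.Ico (nf j) (m - 1), σ i ^ r < β₀ ^ r := hmin h1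
        have hsplit : ∑ i ∈ Finset.Ico (nf j) m, σ i ^ r
            = ∑ i ∈ Finset.Ico (nf j) (m - 1), σ i ^ r + σ (m - 1) ^ r := by
          conv_lhs => rw [show m = (m - 1) + 1 by omega]
          rw [Finset.sum_Ico_succ_top (by omega)]
        rw [hsplit]
        linarith [hM (m - 1)]
      · have hmeq : m = nf j + 1 := by omega
        rw [hmeq, Finset.sum_Ico_succ_top (le_refl _), Finset.Ico_self,
          Finset.sum_empty, zero_add]
        linarith [hM (nf j)]
end

section
/- Let $p > 2$ and $1/2 = 1/p + 1/r$. For natural numbers $n \le n_0$ and $m$, the Banach–Mazur type distance estimate $d(S_p^{n,m}, \ell_p^n(\ell_2^m)) \le n^{1/2 - 1/p} \le n_0^{1/r}$ holds, where $S_p^{n,m}$ denotes $n \times m$ matrices with the Schatten $p$-norm and $\ell_p^n(\ell_2^m)$ denotes the same matrices normed by $\big( \sum_{i=1}^n (\sum_{j=1}^m |x_{ij}|^2)^{p/2} \big)^{1/p}$ (rows in $\ell_2$, outer $\ell_p$). Concretely, for every $n \times m$ matrix $x$ with rows $x_i$, $n^{-(1/2-1/p)}\big(\sum_i \|x_i\|_2^p\big)^{1/p}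 \le \|x\|_{S_p} \le n^{1/2-1/p}\big(\sum_i \|x_i\|_2^p\big)^{1/p}$, i.e. $\|x\|_{S_p} \sim_{n^{1/2-1/p}} \big(\sum_i \|x_i\|_2^p\big)^{1/p}$. -/
open scoped BigOperators
open scoped ComplexOrder

-- L1: sum of q-powers ≤ q-power of sum (q ≥ 1, nonneg terms)
lemma aux_sum_rpow_le {ι : Type*} (s : Finset ι) (f : ι → ℝ) {q : ℝ} (hq : 1 ≤ q)
    (hf : ∀ i ∈ s, 0 ≤ f i) : ∑ i ∈ s, f i ^ q ≤ (∑ i ∈ s, f i) ^ q := by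
  have hS : 0 ≤ ∑ i ∈ s, f i := Finset.sum_nonneg hf
  have hq0 : q ≠ 0 := by linarith
  calc ∑ i ∈ s, f i ^ q ≤ ∑ i ∈ s, f i * (∑ j ∈ s, f j) ^ (q - 1) := by
        refine Finset.sum_le_sum fun i hi => ?_
        have h1 : f i ^ q = f i ^ (1 + (q - 1)) := by norm_num
        rw [h1, Real.rpow_add' (hf i hi) (by simpa using hq0), Real.rpow_one]
        exact mul_le_mul_of_nonneg_left
          (Real.rpow_le_rpow (hf i hi) (Finset.single_le_sum hf hi) (by linarith)) (hf i hi)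
    _ = (∑ i ∈ s, f i) ^ q := by
        rw [← Finset.sum_mul]
        rw [show (q : ℝ) = 1 + (q - 1) by ring, Real.rpow_add' hS (by simpa using hq0),
          Real.rpow_one]
        norm_num

-- L2: Hölder: sum ≤ card^{1-1/q} * (sum of q powers)^{1/q}
lemma aux_holder {ι : Type*} (s : Finset ι) (f : ι → ℝ) {q : ℝ} (hq : 1 ≤ q)
    (hf : ∀ i, 0 ≤ f i) :
    ∑ i ∈ s, f i ≤ (s.card : ℝ) ^ (1 - q⁻¹) * (∑ i ∈ s, f i ^ q) ^ q⁻¹ := by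
  have := Real.inner_le_weight_mul_Lp_of_nonneg s hq (fun _ => (1:ℝ)) f
    (fun _ => zero_le_one) hf
  simpa using this

-- trace identity: sum of eigenvalues of xᴴx equals the squared Frobenius norm
lemma aux_sum_eigs {n m : ℕ} (x : Matrix (Fin n) (Fin m) ℂ) :
    ∑ i, (Matrix.isHermitian_conjTranspose_mul_self x).eigenvalues i
      = ∑ i, ∑ j, ‖x i j‖ ^ 2 := by
  set hA := Matrix.isHermitian_conjTranspose_mul_self x
  have h1 : ((∑ i, hA.eigenvalues i : ℝ) : ℂ) = (x.conjTranspose * x).trace := by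
    conv_rhs => rw [hA.spectral_theorem]
    rw [Unitary.conjStarAlgAut_apply, Matrix.trace_mul_cycle]
    rw [show (star (hA.eigenvectorUnitary : Matrix (Fin m) (Fin m) ℂ)) *
        (hA.eigenvectorUnitary : Matrix (Fin m) (Fin m) ℂ) = 1 from
      Matrix.UnitaryGroup.star_mul_self _]
    rw [one_mul, Matrix.trace_diagonal]
    push_cast
    rfl
  have h2 : (x.conjTranspose * x).trace = ((∑ i, ∑ j, ‖x i j‖ ^ 2 : ℝ) : ℂ) := by
    push_cast
    rw [Matrix.trace]
    simp only [Matrix.diag, Matrix.mul_apply, Matrix.conjTranspose_apply]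
    rw [Finset.sum_comm]
    refine Finset.sum_congr rfl fun i _ => Finset.sum_congr rfl fun j _ => ?_
    rw [mul_comm, Complex.star_def, Complex.mul_conj, Complex.normSq_eq_norm_sq]
    push_cast
    ring
  exact_mod_cast h1.trans h2

-- combine: A ≤ T^q and T ≤ n^{1-1/q} B^{1/q} give A ≤ n^{q-1} B
lemma aux_combine {q : ℝ} (hq : 1 ≤ q) {n : ℕ} {A B T : ℝ} (hB : 0 ≤ B) (hT : 0 ≤ T)
    (hAT : A ≤ T ^ q) (hTB : T ≤ (n : ℝ) ^ (1 - q⁻¹) * B ^ q⁻¹) :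
    A ≤ (n : ℝ) ^ (q - 1) * B := by
  have hq0 : (0:ℝ) < q := by linarith
  have hn : (0:ℝ) ≤ n := Nat.cast_nonneg n
  calc A ≤ T ^ q := hAT
    _ ≤ ((n : ℝ) ^ (1 - q⁻¹) * B ^ q⁻¹) ^ q := Real.rpow_le_rpow hT hTB hq0.le
    _ = (n : ℝ) ^ (q - 1) * B := by
        rw [Real.mul_rpow (Real.rpow_nonneg hn _) (Real.rpow_nonneg hB _),
          ← Real.rpow_mul hn, ← Real.rpow_mul hB, inv_mul_cancel₀ hq0.ne', Real.rpow_one]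
        congr 1
        field_simp

-- take 1/p-th powers
lemma aux_final {p : ℝ} (hp : 2 < p) {n : ℕ} {A B : ℝ} (hA : 0 ≤ A) (hB : 0 ≤ B)
    (h : A ≤ (n : ℝ) ^ (p / 2 - 1) * B) :
    A ^ (1 / p) ≤ (n : ℝ) ^ ((1 / 2 : ℝ) - 1 / p) * B ^ (1 / p) := by
  have hp0 : (0:ℝ) < p := by linarith
  have hn : (0:ℝ) ≤ n := Nat.cast_nonneg n
  have h2 := Real.rpow_le_rpow hA h (by positivity : (0:ℝ) ≤ 1 / p)
  calc A ^ (1 / p) ≤ ((n : ℝ) ^ (p / 2 - 1) * B) ^ (1 / p) := h2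
    _ = (n : ℝ) ^ ((1 / 2 : ℝ) - 1 / p) * B ^ (1 / p) := by
        rw [Real.mul_rpow (Real.rpow_nonneg hn _) hB, ← Real.rpow_mul hn]
        congr 2
        field_simp


/-- The Schatten `p`-norm of a rectangular complex matrix, computed via the
eigenvalues of `xᴴ x` (the squares of the singular values). -/
noncomputable def schattenNorm (p : ℝ) {m n : ℕ} (x : Matrix (Fin n) (Fin m) ℂ) : ℝ :=
  (∑ i, ((Matrix.isHermitian_conjTranspose_mul_self x).eigenvalues i) ^ (p / 2)) ^ (1 / p)

/-- Distance estimate between thin Schatten blocks `S_p^{n,m}` and the row-Hilbertian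
space `ℓ_p^n(ℓ_2^m)`: for `p > 2`, `1/2 = 1/p + 1/r` and `n ≤ n₀`, every `n × m`
matrix `x` satisfies the two-sided comparison
`n^{-(1/2-1/p)} (∑ᵢ ‖xᵢ‖₂^p)^{1/p} ≤ ‖x‖_{S_p} ≤ n^{1/2-1/p} (∑ᵢ ‖xᵢ‖₂^p)^{1/p}`,
and `n^{1/2-1/p} ≤ n₀^{1/r}`. -/
theorem schatten_row_comparison (p r : ℝ) (hp : 2 < p) (hpr : 1 / 2 = 1 / p + 1 / r)
    (n₀ n m : ℕ) (hn : n ≤ n₀) :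
    (∀ x : Matrix (Fin n) (Fin m) ℂ,
      (n : ℝ) ^ (-((1 / 2 : ℝ) - 1 / p))
          * (∑ i, (∑ j, ‖x i j‖ ^ 2) ^ (p / 2)) ^ (1 / p)
        ≤ schattenNorm p x ∧
      schattenNorm p x
        ≤ (n : ℝ) ^ ((1 / 2 : ℝ) - 1 / p)
          * (∑ i, (∑ j, ‖x i j‖ ^ 2) ^ (p / 2)) ^ (1 / p)) ∧
    (n : ℝ) ^ ((1 / 2 : ℝ) - 1 / p) ≤ (n₀ : ℝ) ^ (1 / r) := by
  classical
  have hp0 : (0:ℝ) < p := by linarith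
  have hq : (1:ℝ) ≤ p / 2 := by linarith
  have hε : (0:ℝ) < (1 / 2 : ℝ) - 1 / p := by
    have : 1 / p < 1 / 2 := by
      apply one_div_lt_one_div_of_lt <;> linarith
    linarith
  constructor
  · intro x
    set hA := Matrix.isHermitian_conjTranspose_mul_self x with hAdef
    have hlam : ∀ i, 0 ≤ hA.eigenvalues i := fun i =>
      Matrix.eigenvalues_conjTranspose_mul_self_nonneg x i
    have ha : ∀ i : Fin n, (0:ℝ) ≤ ∑ j, ‖x i j‖ ^ 2 := fun i =>
      Finset.sum_nonneg fun j _ => by positivity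
    set S := ∑ i, hA.eigenvalues i ^ (p / 2) with hSdef
    set R := ∑ i, (∑ j, ‖x i j‖ ^ 2) ^ (p / 2) with hRdef
    set T := ∑ i, hA.eigenvalues i with hTdef
    have hT : T = ∑ i, ∑ j, ‖x i j‖ ^ 2 := aux_sum_eigs x
    have hS0 : 0 ≤ S := Finset.sum_nonneg fun i _ => Real.rpow_nonneg (hlam i) _
    have hR0 : 0 ≤ R := Finset.sum_nonneg fun i _ => Real.rpow_nonneg (ha i) _
    have hT0 : 0 ≤ T := Finset.sum_nonneg fun i _ => hlam i
    -- F1 : S ≤ T ^ (p/2)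
    have F1 : S ≤ T ^ (p / 2) := aux_sum_rpow_le _ _ hq fun i _ => hlam i
    -- F2 : R ≤ T ^ (p/2)
    have F2 : R ≤ T ^ (p / 2) := by
      rw [hT]
      exact aux_sum_rpow_le _ _ hq fun i _ => ha i
    -- F3 : T ≤ n^{1-(p/2)⁻¹} R^{(p/2)⁻¹}
    have F3 : T ≤ (n : ℝ) ^ (1 - (p / 2)⁻¹) * R ^ (p / 2)⁻¹ := by
      rw [hT]
      have := aux_holder Finset.univ (fun i : Fin n => ∑ j, ‖x i j‖ ^ 2) hq ha
      simpa [hRdef] using this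
    -- exponent nonnegativity fact
    have hexp : (0:ℝ) ≤ 1 - (p / 2)⁻¹ := by
      have : (p / 2)⁻¹ ≤ 1 := inv_le_one_of_one_le₀ hq
      linarith
    -- F4 : T ≤ n^{1-(p/2)⁻¹} S^{(p/2)⁻¹}
    have F4 : T ≤ (n : ℝ) ^ (1 - (p / 2)⁻¹) * S ^ (p / 2)⁻¹ := by
      set s : Finset (Fin m) := Finset.univ.filter (fun i => hA.eigenvalues i ≠ 0) with hsdef
      have hcard : s.card ≤ n := by
        have h1 : (x.conjTranspose * x).rank = Fintype.card {i // hA.eigenvalues i ≠ 0} :=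
          hA.rank_eq_card_non_zero_eigs
        have h2 : Fintype.card {i // hA.eigenvalues i ≠ 0} = s.card := Fintype.card_subtype _
        have h3 : (x.conjTranspose * x).rank ≤ n := by
          rw [Matrix.rank_conjTranspose_mul_self]
          exact Matrix.rank_le_height x
        omega
      have hsum : ∑ i ∈ s, hA.eigenvalues i = T := Finset.sum_filter_ne_zero _
      calc T = ∑ i ∈ s, hA.eigenvalues i := hsum.symm
        _ ≤ (s.card : ℝ) ^ (1 - (p / 2)⁻¹) * (∑ i ∈ s, hA.eigenvalues i ^ (p / 2)) ^ (p / 2)⁻¹ :=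
            aux_holder s _ hq hlam
        _ ≤ (n : ℝ) ^ (1 - (p / 2)⁻¹) * S ^ (p / 2)⁻¹ := by
            have hsub : ∑ i ∈ s, hA.eigenvalues i ^ (p / 2) ≤ S := by
              refine Finset.sum_le_sum_of_subset_of_nonneg (Finset.filter_subset _ _)
                fun i _ _ => Real.rpow_nonneg (hlam i) _
            have h5 : (0:ℝ) ≤ ∑ i ∈ s, hA.eigenvalues i ^ (p / 2) :=
              Finset.sum_nonneg fun i _ => Real.rpow_nonneg (hlam i) _
            have hcard' : (s.card : ℝ) ≤ (n : ℝ) := by exact_mod_cast hcard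
            gcongr
    -- final combinations
    have hSR : S ≤ (n : ℝ) ^ (p / 2 - 1) * R := aux_combine hq hR0 hT0 F1 F3
    have hRS : R ≤ (n : ℝ) ^ (p / 2 - 1) * S := aux_combine hq hS0 hT0 F2 F4
    have hupper : S ^ (1 / p) ≤ (n : ℝ) ^ ((1 / 2 : ℝ) - 1 / p) * R ^ (1 / p) :=
      aux_final hp hS0 hR0 hSR
    have hlowkey : R ^ (1 / p) ≤ (n : ℝ) ^ ((1 / 2 : ℝ) - 1 / p) * S ^ (1 / p) :=
      aux_final hp hR0 hS0 hRS
    have hschatten : schattenNorm p x = S ^ (1 / p) := rfl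
    refine ⟨?_, by rw [hschatten]; exact hupper⟩
    rw [hschatten]
    rcases Nat.eq_zero_or_pos n with hn0 | hn0
    · subst hn0
      rw [Nat.cast_zero, Real.zero_rpow (neg_ne_zero.mpr hε.ne'), zero_mul]
      exact Real.rpow_nonneg hS0 _
    · have hnpos : (0:ℝ) < n := by exact_mod_cast hn0
      have step : (n : ℝ) ^ (-((1 / 2 : ℝ) - 1 / p)) * (R ^ (1 / p))
          ≤ (n : ℝ) ^ (-((1 / 2 : ℝ) - 1 / p)) * ((n : ℝ) ^ ((1 / 2 : ℝ) - 1 / p) * S ^ (1 / p)) :=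
        mul_le_mul_of_nonneg_left hlowkey (Real.rpow_nonneg hnpos.le _)
      rw [← mul_assoc, ← Real.rpow_add hnpos, neg_add_cancel, Real.rpow_zero, one_mul] at step
      exact step
  · have hr : 1 / r = (1 / 2 : ℝ) - 1 / p := by linarith
    rw [hr]
    exact Real.rpow_le_rpow (Nat.cast_nonneg n) (Nat.cast_le.mpr hn) hε.le
end
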